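/- For n ≥ 1, b₁, b₂ nonzero real numbers, and c₁ ∈ ℝ, define α : gl(n+1,ℝ) → sl(n+2,ℝ) by sending the block matrix with entries (a, Yᵀ; X, A) (where a = −Tr(A), X ∈ ℝⁿ, Y ∈ ℝⁿ, A ∈ gl(n,ℝ)) to the (n+2)×(n+2) block matrix with rows ((1/2)a, (1/(2b₁))Yᵀ, (1/(4b₁b₂))a ; b₁X, A, (1/(2b₂))X ; b₁b₂ a, b₂Yᵀ, (1/2)a). Then α is a Lie algebra homomorphism from sl(n+1,ℝ) into sl(n+2,ℝ). -/

import Mathlib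

/-- The extension map `α` of the Lagrangean contact example, written in
`(1,n,1)`-block form (the domain `sl(n+1,ℝ)` is written in `(1,n)`-block form,
with index type `Unit ⊕ Fin n`, the target `sl(n+2,ℝ)` with index type
`Unit ⊕ (Fin n ⊕ Unit)`).  For `M = (a, Yᵀ; X, A)` the image is
`((1/2)a, (1/(2b₁))Yᵀ, (1/(4b₁b₂))a ; b₁X, A, (1/(2b₂))X ; b₁b₂a, b₂Yᵀ, (1/2)a)`. -/
noncomputable def lagAlpha (n : ℕ) (b₁ b₂ : ℝ)
    (M : Matrix (Unit ⊕ Fin n) (Unit ⊕ Fin n) ℝ) :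
    Matrix (Unit ⊕ (Fin n ⊕ Unit)) (Unit ⊕ (Fin n ⊕ Unit)) ℝ :=
  fun r c =>
    match r, c with
    | .inl _, .inl _ => (1 / 2) * M (.inl ()) (.inl ())
    | .inl _, .inr (.inl j) => (1 / (2 * b₁)) * M (.inl ()) (.inr j)
    | .inl _, .inr (.inr _) => (1 / (4 * b₁ * b₂)) * M (.inl ()) (.inl ())
    | .inr (.inl i), .inl _ => b₁ * M (.inr i) (.inl ())
    | .inr (.inl i), .inr (.inl j) => M (.inr i) (.inr j)
    | .inr (.inl i), .inr (.inr _) => (1 / (2 * b₂)) * M (.inr i) (.inl ())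
    | .inr (.inr _), .inl _ => b₁ * b₂ * M (.inl ()) (.inl ())
    | .inr (.inr _), .inr (.inl j) => b₂ * M (.inl ()) (.inr j)
    | .inr (.inr _), .inr (.inr _) => (1 / 2) * M (.inl ()) (.inl ())

/-! The map `α` is `M ↦ T * M * S` for a `(n+2) × (n+1)` matrix `T` and a `(n+1) × (n+2)` matrix
`S` with `S * T = 1`. Such a sandwich is multiplicative, since `T M S T N S = T M N S`, and
preserves traces by cyclicity, `tr (T M S) = tr (S T M) = tr M`; hence it preserves commutators
and maps `sl(n+1)` into `sl(n+2)`. -/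

namespace Matrix

variable {m n R : Type*} [Fintype m] [Fintype n] [DecidableEq n] [CommSemiring R]

@[simps]
def sandwichNonUnitalAlgHom (T : Matrix m n R) (S : Matrix n m R) (hST : S * T = 1) :
    Matrix n n R →ₙₐ[R] Matrix m m R where
  toFun M := T * M * S
  map_smul' c M := by rw [Matrix.mul_smul, Matrix.smul_mul]; rfl
  map_zero' := by rw [Matrix.mul_zero, Matrix.zero_mul]
  map_add' M N := by rw [Matrix.mul_add, Matrix.add_mul]
  map_mul' M N := by
    simp only [Matrix.mul_assoc]
    rw [← Matrix.mul_assoc S T, hST, Matrix.one_mul]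

theorem trace_mul_mul_of_mul_eq_one {T : Matrix m n R} {S : Matrix n m R} (hST : S * T = 1)
    (M : Matrix n n R) : trace (T * M * S) = trace M := by
  rw [trace_mul_cycle, hST, Matrix.one_mul]

end Matrix

noncomputable def lagSection (n : ℕ) (b₁ b₂ : ℝ) :
    Matrix (Unit ⊕ (Fin n ⊕ Unit)) (Unit ⊕ Fin n) ℝ :=
  fun r c =>
    match r, c with
    | .inl _, .inl _ => 1 / (2 * b₁)
    | .inr (.inl i), .inr j => if i = j then 1 else 0
    | .inr (.inr _), .inl _ => b₂
    | _, _ => 0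

noncomputable def lagRetraction (n : ℕ) (b₁ b₂ : ℝ) :
    Matrix (Unit ⊕ Fin n) (Unit ⊕ (Fin n ⊕ Unit)) ℝ :=
  fun r c =>
    match r, c with
    | .inl _, .inl _ => b₁
    | .inl _, .inr (.inr _) => 1 / (2 * b₂)
    | .inr i, .inr (.inl j) => if i = j then 1 else 0
    | _, _ => 0

theorem lagRetraction_mul_lagSection {n : ℕ} {b₁ b₂ : ℝ} (hb₁ : b₁ ≠ 0) (hb₂ : b₂ ≠ 0) :
    lagRetraction n b₁ b₂ * lagSection n b₁ b₂ = 1 := by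
  ext (_ | i) (_ | j) <;>
    simp [lagRetraction, lagSection, Matrix.mul_apply, Fintype.sum_sum_type, Matrix.one_apply, hb₁]
  field_simp
  norm_num

theorem lagAlpha_eq_lagSection_mul_mul_lagRetraction {n : ℕ} {b₁ b₂ : ℝ} (hb₁ : b₁ ≠ 0)
    (hb₂ : b₂ ≠ 0) (M : Matrix (Unit ⊕ Fin n) (Unit ⊕ Fin n) ℝ) :
    lagAlpha n b₁ b₂ M = lagSection n b₁ b₂ * M * lagRetraction n b₁ b₂ := by
  ext (_ | i | _) (_ | j | _) <;>
    simp [lagAlpha, lagSection, lagRetraction, Matrix.mul_apply, Fintype.sum_sum_type]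
  all_goals field_simp
  ring

theorem lagAlpha_lieHom_general (n : ℕ) (b₁ b₂ : ℝ) (hb₁ : b₁ ≠ 0) (hb₂ : b₂ ≠ 0) :
    (∀ M N : Matrix (Unit ⊕ Fin n) (Unit ⊕ Fin n) ℝ,
        lagAlpha n b₁ b₂ (M + N) = lagAlpha n b₁ b₂ M + lagAlpha n b₁ b₂ N) ∧
    (∀ (c : ℝ) (M : Matrix (Unit ⊕ Fin n) (Unit ⊕ Fin n) ℝ),
        lagAlpha n b₁ b₂ (c • M) = c • lagAlpha n b₁ b₂ M) ∧
    (∀ M : Matrix (Unit ⊕ Fin n) (Unit ⊕ Fin n) ℝ,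
        M.trace = 0 → (lagAlpha n b₁ b₂ M).trace = 0) ∧
    (∀ M N : Matrix (Unit ⊕ Fin n) (Unit ⊕ Fin n) ℝ, M.trace = 0 → N.trace = 0 →
        lagAlpha n b₁ b₂ (M * N - N * M) =
          lagAlpha n b₁ b₂ M * lagAlpha n b₁ b₂ N -
            lagAlpha n b₁ b₂ N * lagAlpha n b₁ b₂ M) := by
  have hST := lagRetraction_mul_lagSection (n := n) hb₁ hb₂
  let α := Matrix.sandwichNonUnitalAlgHom _ _ hST
  have hα (M) : lagAlpha n b₁ b₂ M = α M :=
    lagAlpha_eq_lagSection_mul_mul_lagRetraction hb₁ hb₂ M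
  simp only [hα]
  refine ⟨map_add α, map_smul α, fun M hM => ?_, fun M N _ _ => ?_⟩
  · rw [Matrix.sandwichNonUnitalAlgHom_apply, Matrix.trace_mul_mul_of_mul_eq_one hST, hM]
  · rw [map_sub, map_mul, map_mul]

/-- For `n ≥ 1` and nonzero reals `b₁, b₂`, the map `α` above
is a Lie algebra homomorphism from `sl(n+1,ℝ)` into `sl(n+2,ℝ)`: it is linear,
maps traceless matrices to traceless matrices, and preserves commutator
brackets of traceless matrices. -/
theorem lagAlpha_lieHom (n : ℕ) (hn : 1 ≤ n) (b₁ b₂ : ℝ) (hb₁ : b₁ ≠ 0) (hb₂ : b₂ ≠ 0) :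
    (∀ M N : Matrix (Unit ⊕ Fin n) (Unit ⊕ Fin n) ℝ,
        lagAlpha n b₁ b₂ (M + N) = lagAlpha n b₁ b₂ M + lagAlpha n b₁ b₂ N) ∧
    (∀ (c : ℝ) (M : Matrix (Unit ⊕ Fin n) (Unit ⊕ Fin n) ℝ),
        lagAlpha n b₁ b₂ (c • M) = c • lagAlpha n b₁ b₂ M) ∧
    (∀ M : Matrix (Unit ⊕ Fin n) (Unit ⊕ Fin n) ℝ,
        M.trace = 0 → (lagAlpha n b₁ b₂ M).trace = 0) ∧
    (∀ M N : Matrix (Unit ⊕ Fin n) (Unit ⊕ Fin n) ℝ, M.trace = 0 → N.trace = 0 →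
        lagAlpha n b₁ b₂ (M * N - N * M) =
          lagAlpha n b₁ b₂ M * lagAlpha n b₁ b₂ N -
            lagAlpha n b₁ b₂ N * lagAlpha n b₁ b₂ M) :=
  lagAlpha_lieHom_general n b₁ b₂ hb₁ hb₂
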